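/- arXiv:1408.5813 — 3 statements merged into one kernel-verified Lean document; each statement's English description precedes it below -/
import Mathlib

section
/- Let p : E → X be a covering map between locally compact Hausdorff topological spaces, and let H : [0,1] × X → X be a continuous map such that for each t ∈ [0,1] the map H(t,·) : X → X is a homeomorphism and H(0,·) = id_X. Then there exists a continuous map H̃ : [0,1] × E → E such that H̃(0,·) = id_E, for all t ∈ [0,1] and e ∈ E one has p(H̃(t,e)) = H(t, p(e)), and for each t ∈ [0,1] the map H̃(t,·) : E → E is a homeomorphism of E. -/
/-!
The family `(t, e) ↦ H (t, p e)` is a homotopy starting at `p`, so the homotopy lifting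
property of covering maps lifts it to a homotopy `H'` starting at the identity of `E`.
To invert the slice `H' t`, lift the homotopy `s ↦ H (t * σ s) ∘ (H t)⁻¹ ∘ p`, which runs
back from `p` to `(H t)⁻¹ ∘ p`; its end `C` is a lift of `(H t)⁻¹`. Both composites
`H' t ∘ C` and `C ∘ H' t` are the identity because, for each point, they are endpoints of
two lifts of the same path in `X` with the same starting point.
-/

open unitInterval

namespace IsCoveringMap

variable {E X : Type*} [TopologicalSpace E] [TopologicalSpace X] {p : E → X}

theorem exists_homotopy_lift_from_id (cov : IsCoveringMap p) {G : I × E → X}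
    (hG : Continuous G) (hG0 : ∀ e, G (0, e) = p e) :
    ∃ L : I × E → E, Continuous L ∧ (∀ s e, p (L (s, e)) = G (s, e)) ∧ ∀ e, L (0, e) = e :=
  ⟨cov.liftHomotopy ⟨G, hG⟩ (.id E) hG0, (cov.liftHomotopy ..).continuous,
    fun s e => congr_fun (cov.liftHomotopy_lifts ..) (s, e), cov.liftHomotopy_zero _ _ _⟩

section SliceInverse

variable {H : I × X → X} {L M : I × E → E} {t : I} {ψ : X → X}

theorem lift_apply_reverseLift_one (cov : IsCoveringMap p) (hH0 : ∀ x, H (0, x) = x)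
    (hL : Continuous L) (hLp : ∀ s e, p (L (s, e)) = H (s, p e)) (hL0 : ∀ e, L (0, e) = e)
    (hM : Continuous M) (hMp : ∀ s e, p (M (s, e)) = H (t * σ s, ψ (p e)))
    (hM0 : ∀ e, M (0, e) = e) (e : E) :
    L (t, M (1, e)) = e := by
  have hpaths := cov.eq_of_comp_eq (g₁ := fun s => L (t * s, M (1, e)))
    (g₂ := fun s => M (σ s, e)) (by fun_prop) (by fun_prop)
    (funext fun s => by
      simp only [Function.comp_apply, hLp, hMp, symm_one, mul_zero, hH0, symm_symm])
    0 (by simp only [mul_zero, hL0, symm_zero])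
  simpa only [mul_one, symm_one, hM0] using congr_fun hpaths 1

theorem reverseLift_one_apply_lift (cov : IsCoveringMap p)
    (hψ : Function.LeftInverse ψ (fun x => H (t, x)))
    (hL : Continuous L) (hLp : ∀ s e, p (L (s, e)) = H (s, p e)) (hL0 : ∀ e, L (0, e) = e)
    (hM : Continuous M) (hMp : ∀ s e, p (M (s, e)) = H (t * σ s, ψ (p e)))
    (hM0 : ∀ e, M (0, e) = e) (e : E) :
    M (1, L (t, e)) = e := by
  have hpaths := cov.eq_of_comp_eq (g₁ := fun s => M (s, L (t, e)))
    (g₂ := fun s => L (t * σ s, e)) (by fun_prop) (by fun_prop)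
    (funext fun s => by simp only [Function.comp_apply, hLp, hMp, hψ (p e)])
    0 (by simp only [hM0, symm_zero, mul_one])
  simpa only [symm_one, mul_zero, hL0] using congr_fun hpaths 1

theorem isHomeomorph_lift_slice (cov : IsCoveringMap p) (hH : Continuous H)
    (hH0 : ∀ x, H (0, x) = x) (ht : IsHomeomorph (fun x => H (t, x)))
    (hL : Continuous L) (hLp : ∀ s e, p (L (s, e)) = H (s, p e)) (hL0 : ∀ e, L (0, e) = e) :
    IsHomeomorph (fun e => L (t, e)) := by
  set Φ := ht.homeomorph
  have hp := cov.continuous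
  have hΦ := Φ.symm.continuous
  obtain ⟨M, hM, hMp, hM0⟩ := cov.exists_homotopy_lift_from_id
    (G := fun q => H (t * σ q.1, Φ.symm (p q.2)))
    (by fun_prop) (fun e => by simp only [symm_zero, mul_one]; exact Φ.apply_symm_apply (p e))
  refine isHomeomorph_iff_exists_inverse.mpr
    ⟨by fun_prop, fun e => M (1, e), fun e => ?_, fun e => ?_, by fun_prop⟩
  · exact reverseLift_one_apply_lift cov Φ.symm_apply_apply hL hLp hL0 hM hMp hM0 e
  · exact lift_apply_reverseLift_one cov hH0 hL hLp hL0 hM hMp hM0 e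

end SliceInverse

end IsCoveringMap

theorem path_of_homeomorphisms_lifts_general
    {E X : Type*} [TopologicalSpace E] [TopologicalSpace X]
    (p : E → X) (hp : IsCoveringMap p)
    (H : unitInterval × X → X) (hH : Continuous H)
    (hslice : ∀ t : unitInterval, IsHomeomorph (fun x => H (t, x)))
    (h0 : ∀ x : X, H (0, x) = x) :
    ∃ H' : unitInterval × E → E, Continuous H' ∧
      (∀ e : E, H' (0, e) = e) ∧
      (∀ (t : unitInterval) (e : E), p (H' (t, e)) = H (t, p e)) ∧
      (∀ t : unitInterval, IsHomeomorph (fun e => H' (t, e))) := by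
  obtain ⟨L, hL, hLp, hL0⟩ := hp.exists_homotopy_lift_from_id
    (G := fun q => H (q.1, p q.2))
    (hH.comp (continuous_fst.prodMk (hp.continuous.comp continuous_snd))) (fun e => h0 (p e))
  exact ⟨L, hL, hL0, hLp, fun t => hp.isHomeomorph_lift_slice hH h0 (hslice t) hL hLp hL0⟩

/-- **Lifting of paths of homeomorphisms through a covering map.**
Let `p : E → X` be a covering map between locally compact Hausdorff spaces and let
`H : [0,1] × X → X` be a continuous map whose time slices are homeomorphisms of `X`,
with `H 0 = id`. Then `H` lifts to a continuous `H' : [0,1] × E → E` with `H' 0 = id`,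
`p ∘ H' t = H t ∘ p`, and each slice `H' t` a homeomorphism of `E`. -/
theorem path_of_homeomorphisms_lifts
    {E X : Type*} [TopologicalSpace E] [TopologicalSpace X]
    [LocallyCompactSpace E] [T2Space E] [LocallyCompactSpace X] [T2Space X]
    (p : E → X) (hp : IsCoveringMap p)
    (H : unitInterval × X → X) (hH : Continuous H)
    (hslice : ∀ t : unitInterval, IsHomeomorph (fun x => H (t, x)))
    (h0 : ∀ x : X, H (0, x) = x) :
    ∃ H' : unitInterval × E → E, Continuous H' ∧
      (∀ e : E, H' (0, e) = e) ∧
      (∀ (t : unitInterval) (e : E), p (H' (t, e)) = H (t, p e)) ∧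
      (∀ t : unitInterval, IsHomeomorph (fun e => H' (t, e))) :=
  path_of_homeomorphisms_lifts_general p hp H hH hslice h0
end

section
/- Let A be a C*-algebra, let α be a *-automorphism of A, and suppose there exists a nonzero element x ∈ A such that x* · α(x) = 0 and α(x)* · x = 0. Then ‖x − α(x)‖ ≥ ‖x‖, and consequently the uniform distance of α from the identity satisfies d(α, id) = sup_{a ∈ A, ‖a‖ ≤ 1} ‖α(a) − a‖ ≥ 1. -/
/-- If `α` is a *-automorphism of a C*-algebra `A` and there is a nonzero `x ∈ A`
with `x* · α(x) = 0` and `α(x)* · x = 0`, then `‖x − α(x)‖ ≥ ‖x‖` and the uniform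
distance of `α` from the identity, `⨆_{‖a‖ ≤ 1} ‖α(a) − a‖`, is at least `1`. -/
theorem uniform_dist_ge_one_of_orthogonal
    {A : Type*} [NonUnitalNormedRing A] [StarRing A] [CStarRing A]
    [CompleteSpace A] [NormedSpace ℂ A] [IsScalarTower ℂ A A]
    [SMulCommClass ℂ A A] [StarModule ℂ A]
    (α : A ≃⋆ₐ[ℂ] A) (x : A) (hx : x ≠ 0)
    (h₁ : star x * α x = 0) (h₂ : star (α x) * x = 0) :
    ‖x‖ ≤ ‖x - α x‖ ∧ 1 ≤ ⨆ a : {a : A // ‖a‖ ≤ 1}, ‖α a.1 - a.1‖ := by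
  have hxpos : (0 : ℝ) < ‖x‖ := norm_pos_iff.mpr hx
  have key : ‖x‖ ≤ ‖x - α x‖ := by
    have h : star x * (x - α x) = star x * x := by
      rw [mul_sub, h₁, sub_zero]
    have h2 : ‖x‖ * ‖x‖ = ‖star x * (x - α x)‖ := by
      rw [h, CStarRing.norm_star_mul_self]
    have h3 : ‖star x * (x - α x)‖ ≤ ‖star x‖ * ‖x - α x‖ := norm_mul_le _ _
    rw [norm_star] at h3
    have := h2.le.trans h3
    exact le_of_mul_le_mul_left (by linarith) hxpos
  refine ⟨key, ?_⟩
  letI : NonUnitalCStarAlgebra A := { }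
  have hnorm : ∀ a : A, ‖α a‖ = ‖a‖ := fun a =>
    NonUnitalStarAlgHom.norm_map α α.injective a
  set a : A := ((‖x‖⁻¹ : ℝ) : ℂ) • x with ha
  have hanorm : ‖a‖ = 1 := by
    rw [ha, norm_smul]
    simp [norm_inv, hxpos.ne', inv_mul_cancel₀ hxpos.ne']
  have hmem : ‖a‖ ≤ 1 := hanorm.le
  have hval : (1 : ℝ) ≤ ‖α a - a‖ := by
    have : α a - a = ((‖x‖⁻¹ : ℝ) : ℂ) • (α x - x) := by
      rw [ha, map_smul, smul_sub]
    rw [this, norm_smul]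
    have hxa : ‖x‖ ≤ ‖α x - x‖ := by rwa [norm_sub_rev] at key
    have : ‖((‖x‖⁻¹ : ℝ) : ℂ)‖ = ‖x‖⁻¹ := by
      simp [abs_of_nonneg (inv_nonneg.mpr hxpos.le)]
    rw [this]
    rw [← inv_mul_cancel₀ hxpos.ne']
    exact mul_le_mul_of_nonneg_left hxa (inv_nonneg.mpr hxpos.le)
  have hbdd : BddAbove (Set.range fun a : {a : A // ‖a‖ ≤ 1} => ‖α a.1 - a.1‖) := by
    refine ⟨2, ?_⟩
    rintro r ⟨⟨b, hb⟩, rfl⟩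
    calc ‖α b - b‖ ≤ ‖α b‖ + ‖b‖ := norm_sub_le _ _
      _ ≤ 1 + 1 := by rw [hnorm]; exact add_le_add hb hb
      _ = 2 := by norm_num
  exact le_trans hval (le_ciSup hbdd ⟨a, hmem⟩)
end

section
/- Let p : E → X be a covering map with X locally compact Hausdorff and E Hausdorff, and let g : E → E be a homeomorphism with p ∘ g = p (a deck transformation) such that g(e) ≠ e for some e ∈ E. Then there exists a nonzero bounded continuous function f : E → ℂ such that f · (f ∘ g) = 0 (the pointwise product vanishes identically), and consequently sup_{h bounded continuous, h ≠ 0} ‖h ∘ g − h‖_∞ / ‖h‖_∞ ≥ 1, where ‖·‖_∞ denotes the supremum norm. -/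
open Set BoundedContinuousFunction

/-- A local homeomorphism into a locally compact space has locally compact domain. -/
lemma IsLocalHomeomorph.weaklyLocallyCompactSpace_aux
    {E X : Type*} [TopologicalSpace E] [TopologicalSpace X]
    [LocallyCompactSpace X] {p : E → X} (hp : IsLocalHomeomorph p) :
    WeaklyLocallyCompactSpace E := by
  constructor
  intro x
  obtain ⟨q, hx, rfl⟩ := hp x
  obtain ⟨K, hKnhds, hKsub, hKcomp⟩ :=
    local_compact_nhds (q.open_target.mem_nhds (q.map_source hx))
  refine ⟨q.symm '' K, hKcomp.image_of_continuousOn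
    (q.continuousOn_symm.mono hKsub), ?_⟩
  have h1 : q ⁻¹' K ∈ nhds x := (q.continuousAt hx).preimage_mem_nhds hKnhds
  have h2 : q.source ∈ nhds x := q.open_source.mem_nhds hx
  refine Filter.mem_of_superset (Filter.inter_mem h1 h2) ?_
  rintro y ⟨hyK, hys⟩
  exact ⟨q y, hyK, q.left_inv hys⟩

/-- If `p : E → X` is a covering map (`X` locally compact Hausdorff, `E` Hausdorff) and
`g : E ≃ₜ E` is a deck transformation (`p ∘ g = p`) moving some point, then there is a
nonzero bounded continuous `f : E → ℂ` with `f · (f ∘ g) = 0` pointwise; consequently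
`sup_{h ≠ 0} ‖h ∘ g − h‖ / ‖h‖ ≥ 1` over nonzero bounded continuous `h : E → ℂ`. -/
theorem deck_transformation_uniform_dist_ge_one
    {E X : Type*} [TopologicalSpace E] [TopologicalSpace X]
    [T2Space E] [LocallyCompactSpace X] [T2Space X]
    (p : E → X) (hp : IsCoveringMap p)
    (g : E ≃ₜ E) (hg : ∀ e : E, p (g e) = p e)
    (e : E) (he : g e ≠ e) :
    (∃ f : BoundedContinuousFunction E ℂ, f ≠ 0 ∧ ∀ x : E, f x * f (g x) = 0) ∧
      1 ≤ ⨆ h : {h : BoundedContinuousFunction E ℂ // h ≠ 0},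
        ‖h.1.compContinuous (g : ContinuousMap E E) - h.1‖ / ‖h.1‖ := by
  haveI : WeaklyLocallyCompactSpace E :=
    hp.isLocalHomeomorph.weaklyLocallyCompactSpace_aux
  -- find an open `U ∋ e` with `g '' U` disjoint from `U`
  obtain ⟨V, W, hV, hW, hgeV, heW, hVW⟩ := t2_separation he
  set U : Set E := W ∩ g ⁻¹' V with hU
  have hUopen : IsOpen U := hW.inter (hV.preimage g.continuous)
  have heU : e ∈ U := ⟨heW, hgeV⟩
  have hmove : ∀ x ∈ U, g x ∉ U := by
    rintro x ⟨_, hxV⟩ ⟨hgxW, _⟩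
    exact Set.disjoint_left.mp hVW hxV hgxW
  -- a real bump function supported in `U`, equal to 1 at `e`
  obtain ⟨f0, hf0c, hf0e, hf0Icc⟩ :=
    exists_continuous_zero_one_of_isCompact' (isCompact_singleton (x := e))
      hUopen.isClosed_compl (by simpa [Set.disjoint_left] using heU)
  have hf0U : ∀ x, x ∉ U → f0 x = 0 := fun x hx => hf0c hx
  have hf0norm : ∀ x : E, ‖(f0 x : ℂ)‖ ≤ 1 := by
    intro x
    rw [Complex.norm_real, Real.norm_eq_abs]
    obtain ⟨h1, h2⟩ := hf0Icc x
    rw [abs_of_nonneg h1]; exact h2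
  -- package as a bounded continuous ℂ-valued function
  set F : BoundedContinuousFunction E ℂ :=
    BoundedContinuousFunction.ofNormedAddCommGroup (fun x => (f0 x : ℂ))
      (Complex.continuous_ofReal.comp f0.continuous) 1 hf0norm with hF
  have hFapp : ∀ x, F x = (f0 x : ℂ) := fun x => rfl
  have hFe : F e = 1 := by
    rw [hFapp, hf0e (mem_singleton e)]; norm_num
  have hFne : F ≠ 0 := by
    intro h
    apply one_ne_zero (α := ℂ)
    rw [← hFe, h]; rfl
  have hprod : ∀ x : E, F x * F (g x) = 0 := by
    intro x
    by_cases hx : x ∈ U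
    · rw [hFapp (g x), hf0U (g x) (hmove x hx)]
      simp
    · rw [hFapp x, hf0U x hx]
      simp
  refine ⟨⟨F, hFne, hprod⟩, ?_⟩
  -- the supremum bound
  have hFpos : 0 < ‖F‖ := norm_pos_iff.mpr hFne
  have hkey : ‖F‖ ≤ ‖F.compContinuous (g : ContinuousMap E E) - F‖ := by
    rw [BoundedContinuousFunction.norm_le (norm_nonneg _)]
    intro x
    by_cases hx : F x = 0
    · rw [hx, norm_zero]; exact norm_nonneg _
    · have hgx : F (g x) = 0 := by
        rcases mul_eq_zero.mp (hprod x) with h | h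
        · exact absurd h hx
        · exact h
      calc ‖F x‖ = ‖(F.compContinuous (g : ContinuousMap E E) - F) x‖ := by
            simp [BoundedContinuousFunction.compContinuous_apply, hgx]
        _ ≤ ‖F.compContinuous (g : ContinuousMap E E) - F‖ :=
            BoundedContinuousFunction.norm_coe_le_norm _ x
  have hbdd : BddAbove (Set.range fun h : {h : BoundedContinuousFunction E ℂ // h ≠ 0} =>
      ‖h.1.compContinuous (g : ContinuousMap E E) - h.1‖ / ‖h.1‖) := by
    refine ⟨2, ?_⟩
    rintro r ⟨h, rfl⟩
    have hpos : 0 < ‖h.1‖ := norm_pos_iff.mpr h.2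
    rw [div_le_iff₀ hpos]
    calc ‖h.1.compContinuous (g : ContinuousMap E E) - h.1‖
        ≤ ‖h.1.compContinuous (g : ContinuousMap E E)‖ + ‖h.1‖ := norm_sub_le _ _
      _ ≤ ‖h.1‖ + ‖h.1‖ := by
          gcongr
          exact BoundedContinuousFunction.norm_compContinuous_le _ _
      _ = 2 * ‖h.1‖ := by ring
  refine le_ciSup_of_le hbdd ⟨F, hFne⟩ ?_
  rw [le_div_iff₀ hFpos, one_mul]
  exact hkey
end
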